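/- Let (X_n)_{n≥0} be a sequence of independent real-valued random variables such that each X_n is subnormal, i.e. E(e^{λ X_n}) ≤ e^{λ²/2} for every λ ∈ ℝ. Then, almost surely, the sequence c_n = X_n(ω) is a higher order oscillating sequence: for every k ≥ 1, ∑_{n=1}^N |X_n(ω)|^λ = O(N) for some λ ≥ 1 and, for every real polynomial P of degree at most k, (1/N) ∑_{n=0}^{N-1} X_n(ω) e^{2πiP(n)} → 0 as N → ∞. -/

import Mathlib

/-!
Write `e t = exp (2πit)`. Subnormal variables are sub-Gaussian with parameter `1`, so by
Hoeffding's inequality, for any phases `θ`, the sum `∑_{n<N} X_n e(θ_n)` has norm at least `εN`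
with probability at most `4 exp(-ε²N/8)`. For `n < N`, a polynomial phase `P(n)` of degree `≤ k` is
within `1/N` modulo `1` of one of the `M^(k+1)` polynomials whose coefficients lie in
`{0, 1/M, …, (M-1)/M}`, where `M = (k+1)N^(k+1)`. A union bound over this net is still
summable in `N`, so by Borel–Cantelli, almost surely all the net sums are eventually `< εN`.
A Chernoff bound for `∑_{n<N} |X_n|` shows that almost surely it is eventually `< 3N/2`. This
gives the `O(N)` bound (with exponent `1`) and limits the cost of replacing `P` by its net
neighbour to `3π`.
-/

open Filter Finset MeasureTheory

open ProbabilityTheory Real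
open scoped NNReal Topology

namespace HigherOrderOscillation

noncomputable def e (t : ℝ) : ℂ := Complex.exp (2 * π * Complex.I * t)

lemma e_eq_exp_ofReal_mul_I (t : ℝ) : e t = Complex.exp ((2 * π * t : ℝ) * Complex.I) := by
  simp only [e]; push_cast; ring_nf

lemma norm_e (t : ℝ) : ‖e t‖ = 1 := by
  rw [e_eq_exp_ofReal_mul_I, Complex.norm_exp_ofReal_mul_I]

lemma e_add_intCast (t : ℝ) (z : ℤ) : e (t + z) = e t := by
  simp only [e]
  push_cast
  rw [mul_add, Complex.exp_add, mul_comm _ (z : ℂ), Complex.exp_int_mul_two_pi_mul_I, mul_one]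

lemma norm_e_sub_e_le (x y : ℝ) : ‖e x - e y‖ ≤ 2 * π * |x - y| := by
  have h : e x - e y = e y * (Complex.exp (Complex.I * (2 * π * (x - y) : ℝ)) - 1) := by
    simp only [e]
    push_cast
    rw [mul_sub, mul_one, ← Complex.exp_add]
    ring_nf
  rw [h, norm_mul, norm_e, one_mul]
  refine Real.norm_exp_I_mul_ofReal_sub_one_le.trans_eq ?_
  rw [Real.norm_eq_abs, abs_mul, abs_of_pos two_pi_pos]

lemma re_ofReal_mul_e (x t : ℝ) : ((x : ℂ) * e t).re = cos (2 * π * t) * x := by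
  rw [e_eq_exp_ofReal_mul_I, Complex.re_ofReal_mul, Complex.exp_ofReal_mul_I_re, mul_comm]

lemma im_ofReal_mul_e (x t : ℝ) : ((x : ℂ) * e t).im = sin (2 * π * t) * x := by
  rw [e_eq_exp_ofReal_mul_I, Complex.im_ofReal_mul, Complex.exp_ofReal_mul_I_im, mul_comm]

open Polynomial

noncomputable def gridPhase (k M : ℕ) (c : Fin (k + 1) → Fin M) (n : ℕ) : ℝ :=
  ∑ j, (c j : ℝ) / M * (n : ℝ) ^ (j : ℕ)

lemma exists_int_fin_abs_sub_le (a : ℝ) {M : ℕ} (hM : 0 < M) :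
    ∃ (z : ℤ) (c : Fin M), |a - (z + c / M)| ≤ 1 / M := by
  have hM' : (0 : ℝ) < M := Nat.cast_pos.2 hM
  have hy : 0 ≤ Int.fract a * M := mul_nonneg (Int.fract_nonneg a) hM'.le
  refine ⟨⌊a⌋, ⟨⌊Int.fract a * M⌋₊, (Nat.floor_lt hy).2 ?_⟩, ?_⟩
  · nlinarith [Int.fract_lt_one a]
  · have h1 := Nat.floor_le hy
    have h2 := Nat.lt_floor_add_one (Int.fract a * M)
    have h : a - (⌊a⌋ + (⌊Int.fract a * M⌋₊ : ℝ) / M) =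
        (Int.fract a * M - ⌊Int.fract a * M⌋₊) / M := by
      rw [Int.fract]
      field_simp
      ring
    rw [h, abs_of_nonneg (div_nonneg (by linarith) hM'.le)]
    exact div_le_div_of_nonneg_right (by linarith) hM'.le

lemma exists_gridPhase_abs_sub_le {k : ℕ} {P : ℝ[X]} (hP : P.natDegree ≤ k) {M : ℕ}
    (hM : 0 < M) (N : ℕ) :
    ∃ c : Fin (k + 1) → Fin M, ∀ n < N, ∃ z : ℤ,
      |P.eval (n : ℝ) - (gridPhase k M c n + z)| ≤ (k + 1) * N ^ k / M := by
  choose z c hzc using fun j : Fin (k + 1) => exists_int_fin_abs_sub_le (P.coeff j) hM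
  refine ⟨c, fun n hn => ⟨∑ j, z j * n ^ (j : ℕ), ?_⟩⟩
  have hdiff : P.eval (n : ℝ) - (gridPhase k M c n + (∑ j, z j * n ^ (j : ℕ) : ℤ)) =
      ∑ j : Fin (k + 1), (P.coeff j - (z j + c j / M)) * (n : ℝ) ^ (j : ℕ) := by
    rw [eval_eq_sum_range' (Nat.lt_succ_of_le hP), ← Fin.sum_univ_eq_sum_range, gridPhase]
    push_cast
    rw [← sum_add_distrib, ← sum_sub_distrib]
    exact sum_congr rfl fun j _ => by ring
  have hN : (1 : ℝ) ≤ N := by exact_mod_cast hn.pos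
  have hpow (j : Fin (k + 1)) : (n : ℝ) ^ (j : ℕ) ≤ (N : ℝ) ^ k :=
    (pow_le_pow_left₀ n.cast_nonneg (by exact_mod_cast hn.le) j).trans
      (pow_le_pow_right₀ hN (Nat.lt_succ_iff.1 j.2))
  rw [hdiff]
  calc |∑ j : Fin (k + 1), (P.coeff j - (z j + c j / M)) * (n : ℝ) ^ (j : ℕ)|
      ≤ ∑ j : Fin (k + 1), |(P.coeff j - (z j + c j / M)) * (n : ℝ) ^ (j : ℕ)| :=
        abs_sum_le_sum_abs _ _
    _ ≤ ∑ _j : Fin (k + 1), 1 / M * (N : ℝ) ^ k := sum_le_sum fun j _ => by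
        rw [abs_mul, abs_of_nonneg (a := (n : ℝ) ^ (j : ℕ)) (by positivity)]
        exact mul_le_mul (hzc j) (hpow j) (by positivity) (by positivity)
    _ = (k + 1) * N ^ k / M := by
        rw [sum_const, card_univ, Fintype.card_fin, nsmul_eq_mul]
        push_cast
        ring

lemma exists_gridPhase_norm_e_sub_le {k : ℕ} {P : ℝ[X]} (hP : P.natDegree ≤ k) {N : ℕ}
    (hN : 0 < N) :
    ∃ c : Fin (k + 1) → Fin ((k + 1) * N ^ (k + 1)), ∀ n < N,
      ‖e (P.eval (n : ℝ)) - e (gridPhase k _ c n)‖ ≤ 2 * π / N := by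
  obtain ⟨c, hc⟩ := exists_gridPhase_abs_sub_le hP (M := (k + 1) * N ^ (k + 1)) (by positivity) N
  refine ⟨c, fun n hn => ?_⟩
  obtain ⟨z, hz⟩ := hc n hn
  have hM : ((k + 1) * N ^ k / ((k + 1) * N ^ (k + 1) : ℕ) : ℝ) = 1 / N := by
    push_cast
    field_simp
    ring
  calc ‖e (P.eval (n : ℝ)) - e (gridPhase k _ c n)‖
      = ‖e (P.eval (n : ℝ)) - e (gridPhase k _ c n + z)‖ := by rw [e_add_intCast]
    _ ≤ 2 * π * (1 / N) := (norm_e_sub_e_le _ _).trans (by rw [← hM]; gcongr)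
    _ = 2 * π / N := by ring

lemma norm_sum_mul_e_sub_sum_mul_e_le {x θ φ : ℕ → ℝ} {N : ℕ} {δ : ℝ}
    (h : ∀ n < N, ‖e (θ n) - e (φ n)‖ ≤ δ) :
    ‖∑ n ∈ range N, (x n : ℂ) * e (θ n) - ∑ n ∈ range N, (x n : ℂ) * e (φ n)‖ ≤
      δ * ∑ n ∈ range N, |x n| := by
  rw [← sum_sub_distrib, mul_sum]
  refine (norm_sum_le _ _).trans (sum_le_sum fun n hn => ?_)
  rw [← mul_sub, norm_mul, Complex.norm_real, Real.norm_eq_abs, mul_comm]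
  exact mul_le_mul_of_nonneg_right (h n (mem_range.1 hn)) (abs_nonneg _)

lemma tendsto_inv_mul_sum_mul_e_eval {x : ℕ → ℝ} {C : ℝ} {k : ℕ}
    (hx : ∀ᶠ N in atTop, ∑ n ∈ range N, |x n| ≤ C * N)
    (hgrid : ∀ m : ℕ, ∀ᶠ N in atTop, ∀ c : Fin (k + 1) → Fin ((k + 1) * N ^ (k + 1)),
      ‖∑ n ∈ range N, (x n : ℂ) * e (gridPhase k _ c n)‖ ≤ 1 / ((m : ℝ) + 1) * N)
    {P : ℝ[X]} (hP : P.natDegree ≤ k) :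
    Tendsto (fun N : ℕ => (N : ℂ)⁻¹ * ∑ n ∈ range N, (x n : ℂ) * e (P.eval (n : ℝ)))
      atTop (𝓝 0) := by
  rw [NormedAddGroup.tendsto_nhds_zero]
  intro ε hε
  obtain ⟨m, hm⟩ := exists_nat_one_div_lt (half_pos hε)
  have hsmall : ∀ᶠ N : ℕ in atTop, 2 * π * C / N < ε / 2 :=
    (tendsto_const_div_atTop_nhds_zero_nat (2 * π * C)).eventually (gt_mem_nhds (half_pos hε))
  filter_upwards [hx, hgrid m, hsmall, eventually_gt_atTop 0] with N hxN hgridN hsmallN hN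
  obtain ⟨c, hc⟩ := exists_gridPhase_norm_e_sub_le hP hN
  set S := ∑ n ∈ range N, (x n : ℂ) * e (P.eval (n : ℝ))
  set S' := ∑ n ∈ range N, (x n : ℂ) * e (gridPhase k _ c n)
  have hN' : (0 : ℝ) < N := Nat.cast_pos.2 hN
  have hS : ‖S‖ ≤ 1 / ((m : ℝ) + 1) * N + 2 * π / N * (C * N) :=
    (norm_le_insert' S S').trans <| add_le_add (hgridN c) <|
      (norm_sum_mul_e_sub_sum_mul_e_le hc).trans (by gcongr)
  calc ‖(N : ℂ)⁻¹ * S‖ = ‖S‖ / N := by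
        rw [norm_mul, norm_inv, Complex.norm_natCast, inv_mul_eq_div]
    _ ≤ (1 / ((m : ℝ) + 1) * N + 2 * π / N * (C * N)) / N := by gcongr
    _ = 1 / ((m : ℝ) + 1) + 2 * π * C / N := by field_simp
    _ < ε / 2 + ε / 2 := add_lt_add hm hsmallN
    _ = ε := add_halves ε

lemma isBigO_sum_Icc_abs {x : ℕ → ℝ} {C : ℝ}
    (hx : ∀ᶠ N in atTop, ∑ n ∈ range N, |x n| ≤ C * N) :
    (fun N : ℕ => ∑ n ∈ Icc 1 N, |x n|) =O[atTop] (fun N : ℕ => (N : ℝ)) := by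
  refine Asymptotics.IsBigO.of_bound (2 * C) ?_
  filter_upwards [(tendsto_add_atTop_nat 1).eventually hx, eventually_ge_atTop 1] with N hN h1
  have hsub : ∑ n ∈ Icc 1 N, |x n| ≤ ∑ n ∈ range (N + 1), |x n| :=
    sum_le_sum_of_subset_of_nonneg (fun n hn => by simp only [mem_Icc, mem_range] at hn ⊢; omega)
      fun _ _ _ => abs_nonneg _
  have hnonneg : 0 ≤ ∑ n ∈ range (N + 1), |x n| := sum_nonneg fun _ _ => abs_nonneg _
  have hN1 : (1 : ℝ) ≤ N := by exact_mod_cast h1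
  rw [norm_of_nonneg (sum_nonneg fun _ _ => abs_nonneg _), norm_of_nonneg N.cast_nonneg]
  push_cast at hN
  nlinarith

end HigherOrderOscillation

lemma Real.exp_mul_abs_le (t x : ℝ) : exp (t * |x|) ≤ exp (t * x) + exp (-t * x) := by
  rcases abs_cases x with ⟨hx, -⟩ | ⟨hx, -⟩ <;> rw [hx]
  · exact le_add_of_nonneg_right (exp_pos _).le
  · rw [mul_neg, ← neg_mul]
    exact le_add_of_nonneg_left (exp_pos _).le

section

variable {Ω : Type*} [MeasurableSpace Ω] {μ : Measure Ω}

namespace ProbabilityTheory.HasSubgaussianMGF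

variable {X : Ω → ℝ} {c : ℝ≥0}

lemma mono {c' : ℝ≥0} (h : HasSubgaussianMGF X c μ) (hc : c ≤ c') :
    HasSubgaussianMGF X c' μ :=
  ⟨h.integrable_exp_mul, fun t => (h.mgf_le t).trans (exp_le_exp.2 (by gcongr))⟩

lemma const_mul_of_abs_le_one (h : HasSubgaussianMGF X c μ) {r : ℝ} (hr : |r| ≤ 1) :
    HasSubgaussianMGF (fun ω => r * X ω) c μ :=
  (h.const_mul r).mono <| mul_le_of_le_one_left c.2 <|
    NNReal.coe_le_coe.1 ((sq_le_one_iff_abs_le_one r).2 hr)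

lemma integrable_exp_mul_abs (h : HasSubgaussianMGF X c μ) (t : ℝ) :
    Integrable (fun ω => exp (t * |X ω|)) μ :=
  ((h.integrable_exp_mul t).add (h.integrable_exp_mul (-t))).mono'
    (h.aemeasurable.abs.const_mul t).exp.aestronglyMeasurable
    (ae_of_all _ fun ω => by
      rw [norm_of_nonneg (exp_pos _).le]
      exact exp_mul_abs_le t (X ω))

lemma mgf_abs_le (h : HasSubgaussianMGF X c μ) (t : ℝ) :
    mgf (fun ω => |X ω|) μ t ≤ 2 * exp (c * t ^ 2 / 2) :=
  calc mgf (fun ω => |X ω|) μ t ≤ mgf X μ t + mgf X μ (-t) := by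
        rw [mgf, mgf, mgf, ← integral_add (h.integrable_exp_mul t) (h.integrable_exp_mul (-t))]
        exact integral_mono (h.integrable_exp_mul_abs t)
          ((h.integrable_exp_mul t).add (h.integrable_exp_mul (-t))) fun ω => exp_mul_abs_le _ _
    _ ≤ exp (c * t ^ 2 / 2) + exp (c * (-t) ^ 2 / 2) := add_le_add (h.mgf_le t) (h.mgf_le (-t))
    _ = 2 * exp (c * t ^ 2 / 2) := by rw [neg_sq]; ring

end ProbabilityTheory.HasSubgaussianMGF

lemma ProbabilityTheory.iIndepFun.measureReal_sum_range_ge_le {Y : ℕ → Ω → ℝ}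
    (hindep : iIndepFun Y μ) (hmeas : ∀ n, Measurable (Y n)) {t C : ℝ} (ht : 0 ≤ t)
    (hint : ∀ n, Integrable (fun ω => exp (t * Y n ω)) μ) (hmgf : ∀ n, mgf (Y n) μ t ≤ C)
    (a : ℝ) (N : ℕ) :
    μ.real {ω | a * N ≤ ∑ n ∈ range N, Y n ω} ≤ (exp (-t * a) * C) ^ N := by
  have := hindep.isProbabilityMeasure
  calc μ.real {ω | a * N ≤ ∑ n ∈ range N, Y n ω}
      = μ.real {ω | a * N ≤ (∑ n ∈ range N, Y n) ω} := by simp only [Finset.sum_apply]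
    _ ≤ exp (-t * (a * N)) * mgf (∑ n ∈ range N, Y n) μ t :=
        measure_ge_le_exp_mul_mgf _ ht (hindep.integrable_exp_mul_sum hmeas fun n _ => hint n)
    _ = exp (-t * a) ^ N * ∏ n ∈ range N, mgf (Y n) μ t := by
        rw [hindep.mgf_sum hmeas, ← exp_nat_mul]
        ring_nf
    _ ≤ exp (-t * a) ^ N * C ^ N := by
        gcongr
        exact (prod_le_prod (fun n _ => mgf_nonneg) fun n _ => hmgf n).trans_eq
          (by rw [prod_const, card_range])
    _ = (exp (-t * a) * C) ^ N := (mul_pow _ _ _).symm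

lemma MeasureTheory.ae_eventually_notMem_of_summable [IsFiniteMeasure μ] {s : ℕ → Set Ω}
    {f : ℕ → ℝ} (hs : ∀ N, μ.real (s N) ≤ f N) (hf : Summable f) :
    ∀ᵐ ω ∂μ, ∀ᶠ N in atTop, ω ∉ s N := by
  refine ae_eventually_notMem (ne_top_of_le_ne_top (ENNReal.ofReal_ne_top (r := ∑' N, f N)) ?_)
  rw [ENNReal.ofReal_tsum_of_nonneg (fun N => measureReal_nonneg.trans (hs N)) hf]
  refine ENNReal.tsum_le_tsum fun N => ?_
  rw [← ofReal_measureReal]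
  exact ENNReal.ofReal_le_ofReal (hs N)

namespace HigherOrderOscillation

variable {X : ℕ → Ω → ℝ} {c : ℝ≥0}

lemma measureReal_sum_mul_ge_le (hindep : iIndepFun X μ)
    (hX : ∀ n, HasSubgaussianMGF (X n) c μ) {a : ℕ → ℝ} (ha : ∀ n, |a n| ≤ 1)
    {ε : ℝ} (hε : 0 ≤ ε) (N : ℕ) :
    μ.real {ω | ε * N ≤ ∑ n ∈ range N, a n * X n ω} ≤ exp (-ε ^ 2 * N / (2 * c)) := by
  have hindep' : iIndepFun (fun n ω => a n * X n ω) μ :=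
    hindep.comp (fun n x => a n * x) fun n => measurable_const_mul (a n)
  refine (HasSubgaussianMGF.measure_sum_range_ge_le_of_iIndepFun hindep'
    (fun n _ => (hX n).const_mul_of_abs_le_one (ha n)) (by positivity)).trans_eq ?_
  -- at `N = 0` both exponents are `0`, the library's through the junk value `x / 0 = 0`
  rcases N.eq_zero_or_pos with rfl | hN
  · simp
  · congr 1
    field_simp

lemma measureReal_abs_sum_mul_ge_le (hindep : iIndepFun X μ)
    (hX : ∀ n, HasSubgaussianMGF (X n) c μ) {a : ℕ → ℝ} (ha : ∀ n, |a n| ≤ 1)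
    {ε : ℝ} (hε : 0 ≤ ε) (N : ℕ) :
    μ.real {ω | ε * N ≤ |∑ n ∈ range N, a n * X n ω|} ≤ 2 * exp (-ε ^ 2 * N / (2 * c)) := by
  have := hindep.isProbabilityMeasure
  have hsplit : {ω | ε * N ≤ |∑ n ∈ range N, a n * X n ω|} ⊆
      {ω | ε * N ≤ ∑ n ∈ range N, a n * X n ω} ∪
        {ω | ε * N ≤ ∑ n ∈ range N, -a n * X n ω} := by
    intro ω hω
    simp only [neg_mul, sum_neg_distrib, Set.mem_union, Set.mem_ofPred_eq] at hω ⊢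
    rcases le_abs'.1 hω with h | h
    · exact .inr (le_neg_of_le_neg h)
    · exact .inl h
  calc μ.real {ω | ε * N ≤ |∑ n ∈ range N, a n * X n ω|}
      ≤ μ.real {ω | ε * N ≤ ∑ n ∈ range N, a n * X n ω} +
        μ.real {ω | ε * N ≤ ∑ n ∈ range N, -a n * X n ω} :=
        (measureReal_mono hsplit).trans (measureReal_union_le _ _)
    _ ≤ exp (-ε ^ 2 * N / (2 * c)) + exp (-ε ^ 2 * N / (2 * c)) :=
        add_le_add (measureReal_sum_mul_ge_le hindep hX ha hε N)
          (measureReal_sum_mul_ge_le hindep hX (fun n => (abs_neg (a n)).trans_le (ha n)) hε N)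
    _ = 2 * exp (-ε ^ 2 * N / (2 * c)) := (two_mul _).symm

lemma measureReal_norm_sum_mul_e_ge_le (hindep : iIndepFun X μ)
    (hX : ∀ n, HasSubgaussianMGF (X n) c μ) (θ : ℕ → ℝ) {ε : ℝ} (hε : 0 ≤ ε) (N : ℕ) :
    μ.real {ω | ε * N ≤ ‖∑ n ∈ range N, (X n ω : ℂ) * e (θ n)‖} ≤
      4 * exp (-ε ^ 2 * N / (8 * c)) := by
  have := hindep.isProbabilityMeasure
  set S : Ω → ℂ := fun ω => ∑ n ∈ range N, (X n ω : ℂ) * e (θ n)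
  have hre (ω : Ω) : (S ω).re = ∑ n ∈ range N, cos (2 * π * θ n) * X n ω := by
    simp only [S, Complex.re_sum, re_ofReal_mul_e]
  have him (ω : Ω) : (S ω).im = ∑ n ∈ range N, sin (2 * π * θ n) * X n ω := by
    simp only [S, Complex.im_sum, im_ofReal_mul_e]
  have hsplit : {ω | ε * N ≤ ‖S ω‖} ⊆
      {ω | ε / 2 * N ≤ |∑ n ∈ range N, cos (2 * π * θ n) * X n ω|} ∪
        {ω | ε / 2 * N ≤ |∑ n ∈ range N, sin (2 * π * θ n) * X n ω|} := by
    intro ω hω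
    have := hω.trans (Complex.norm_le_abs_re_add_abs_im (S ω))
    rw [hre, him] at this
    by_contra! h
    simp only [Set.mem_union, Set.mem_ofPred_eq, not_or, not_le] at h
    linarith [h.1, h.2]
  have hbound : exp (-(ε / 2) ^ 2 * N / (2 * c)) = exp (-ε ^ 2 * N / (8 * c)) := by
    congr 1
    ring
  calc μ.real {ω | ε * N ≤ ‖S ω‖}
      ≤ μ.real {ω | ε / 2 * N ≤ |∑ n ∈ range N, cos (2 * π * θ n) * X n ω|} +
        μ.real {ω | ε / 2 * N ≤ |∑ n ∈ range N, sin (2 * π * θ n) * X n ω|} :=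
        (measureReal_mono hsplit).trans (measureReal_union_le _ _)
    _ ≤ 2 * exp (-(ε / 2) ^ 2 * N / (2 * c)) + 2 * exp (-(ε / 2) ^ 2 * N / (2 * c)) :=
        add_le_add
          (measureReal_abs_sum_mul_ge_le hindep hX (fun n => abs_cos_le_one _) (by positivity) N)
          (measureReal_abs_sum_mul_ge_le hindep hX (fun n => abs_sin_le_one _) (by positivity) N)
    _ = 4 * exp (-ε ^ 2 * N / (8 * c)) := by rw [hbound]; ring

lemma measureReal_exists_norm_sum_mul_e_ge_le {ι : Type*} [Fintype ι] (hindep : iIndepFun X μ)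
    (hX : ∀ n, HasSubgaussianMGF (X n) c μ) (θ : ι → ℕ → ℝ) {ε : ℝ} (hε : 0 ≤ ε) (N : ℕ) :
    μ.real {ω | ∃ i, ε * N ≤ ‖∑ n ∈ range N, (X n ω : ℂ) * e (θ i n)‖} ≤
      Fintype.card ι * (4 * exp (-ε ^ 2 * N / (8 * c))) := by
  rw [Set.ofPred_exists]
  refine (measureReal_iUnion_fintype_le _).trans ?_
  refine (sum_le_sum fun i _ => measureReal_norm_sum_mul_e_ge_le hindep hX (θ i) hε N).trans_eq ?_
  rw [sum_const, card_univ, nsmul_eq_mul]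

lemma ae_eventually_sum_abs_lt (hindep : iIndepFun X μ) (hmeas : ∀ n, Measurable (X n))
    (hX : ∀ n, HasSubgaussianMGF (X n) 1 μ) :
    ∀ᵐ ω ∂μ, ∀ᶠ N in atTop, ∑ n ∈ range N, |X n ω| < 3 / 2 * N := by
  have := hindep.isProbabilityMeasure
  have hdecay (N : ℕ) : μ.real {ω | 3 / 2 * N ≤ ∑ n ∈ range N, |X n ω|} ≤ (2 * exp (-1)) ^ N := by
    refine ((hindep.comp (fun _ => abs) fun _ => measurable_abs).measureReal_sum_range_ge_le
      (fun n => (hmeas n).abs) zero_le_one (fun n => (hX n).integrable_exp_mul_abs 1)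
      (fun n => (hX n).mgf_abs_le 1) _ N).trans_eq ?_
    rw [mul_left_comm, ← exp_add]
    norm_num
  have hratio : 2 * exp (-1) < 1 := by
    rw [exp_neg, ← div_eq_mul_inv, div_lt_one (exp_pos 1)]
    exact exp_one_gt_two
  filter_upwards [ae_eventually_notMem_of_summable hdecay
    (summable_geometric_of_lt_one (by positivity) hratio)] with ω hω
  exact hω.mono fun N hN => not_le.1 hN

lemma ae_eventually_norm_sum_mul_e_gridPhase_lt (hindep : iIndepFun X μ)
    (hX : ∀ n, HasSubgaussianMGF (X n) 1 μ) :
    ∀ᵐ ω ∂μ, ∀ k m : ℕ, ∀ᶠ N in atTop, ∀ c : Fin (k + 1) → Fin ((k + 1) * N ^ (k + 1)),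
      ‖∑ n ∈ range N, (X n ω : ℂ) * e (gridPhase k _ c n)‖ < 1 / ((m : ℝ) + 1) * N := by
  have := hindep.isProbabilityMeasure
  simp only [ae_all_iff]
  intro k m
  set ε : ℝ := 1 / ((m : ℝ) + 1)
  have hdecay (N : ℕ) : μ.real {ω | ∃ c : Fin (k + 1) → Fin ((k + 1) * N ^ (k + 1)),
      ε * N ≤ ‖∑ n ∈ range N, (X n ω : ℂ) * e (gridPhase k _ c n)‖} ≤
      4 * (k + 1) ^ (k + 1) * ((N : ℝ) ^ ((k + 1) * (k + 1)) * exp (-(ε ^ 2 / 8) * N)) := by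
    refine (measureReal_exists_norm_sum_mul_e_ge_le hindep hX (fun c => gridPhase k _ c)
      (by positivity) N).trans_eq ?_
    have hexp : -ε ^ 2 * N / (8 * ((1 : ℝ≥0) : ℝ)) = -(ε ^ 2 / 8) * N := by
      push_cast
      ring
    rw [Fintype.card_fun, Fintype.card_fin, Fintype.card_fin, hexp]
    push_cast
    rw [mul_pow, ← pow_mul]
    ring
  have hsum := (summable_pow_mul_exp_neg_nat_mul ((k + 1) * (k + 1))
    (by positivity : 0 < ε ^ 2 / 8)).mul_left (4 * ((k : ℝ) + 1) ^ (k + 1))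
  filter_upwards [ae_eventually_notMem_of_summable hdecay hsum] with ω hω
  exact hω.mono fun N hN c => not_le.1 fun h => hN ⟨c, h⟩

end HigherOrderOscillation

end

open HigherOrderOscillation in
theorem almostSurely_higherOrderOscillating_of_indep_subnormal
    {Ω : Type*} [MeasurableSpace Ω] (μ : Measure Ω)
    (X : ℕ → Ω → ℝ)
    (hindep : ProbabilityTheory.iIndepFun X μ)
    (hmeas : ∀ n, Measurable (X n))
    (hsubInt : ∀ (n : ℕ) (l : ℝ), Integrable (fun ω => Real.exp (l * X n ω)) μ)
    (hsub : ∀ (n : ℕ) (l : ℝ), ∫ ω, Real.exp (l * X n ω) ∂μ ≤ Real.exp (l ^ 2 / 2)) :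
    ∀ᵐ ω ∂μ, ∀ k : ℕ, 1 ≤ k →
      ((∃ l : ℝ, 1 ≤ l ∧
          (fun N : ℕ => ∑ n ∈ Finset.Icc 1 N, |X n ω| ^ l)
            =O[atTop] (fun N : ℕ => (N : ℝ))) ∧
        ∀ P : Polynomial ℝ, P.natDegree ≤ k →
          Tendsto (fun N : ℕ => (N : ℂ)⁻¹ *
              ∑ n ∈ Finset.range N,
                (X n ω : ℂ) * Complex.exp (2 * Real.pi * Complex.I * (P.eval (n : ℝ))))
            atTop (nhds 0)) := by
  have hX (n : ℕ) : HasSubgaussianMGF (X n) 1 μ :=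
    ⟨hsubInt n, fun t => by simpa [mgf] using hsub n t⟩
  filter_upwards [ae_eventually_sum_abs_lt hindep hmeas hX,
    ae_eventually_norm_sum_mul_e_gridPhase_lt hindep hX] with ω hsum hgrid k _
  have hsum' : ∀ᶠ N in atTop, ∑ n ∈ range N, |X n ω| ≤ 3 / 2 * N := hsum.mono fun _ => le_of_lt
  refine ⟨⟨1, le_rfl, by simpa only [rpow_one] using isBigO_sum_Icc_abs hsum'⟩, fun P hP => ?_⟩
  exact tendsto_inv_mul_sum_mul_e_eval hsum' (fun m => (hgrid k m).mono fun _ h c => (h c).le) hP
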